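/- arXiv:1010.3686 — 5 statements merged into one kernel-verified Lean document; each statement's English description precedes it below -/
import Mathlib

section
/- Let f be a homeomorphism of a compact metric space (X, dist). For any open neighborhood U of the nonwandering set Ω(f) there exist positive numbers B and d₁ such that: if {x_i}_{i∈ℤ} is a d-pseudotrajectory of f with d ≤ d₁ and x_k, x_{k+1}, ..., x_{k+l} ∉ U for some l > 0 and k ∈ ℤ, then l ≤ B. -/
/-- `x : ℤ → X` is a `d`-pseudotrajectory of `f`: `dist (f (x i)) (x (i+1)) < d` for all `i`. -/
def IsPseudoTraj {X : Type*} [MetricSpace X] (f : X → X) (d : ℝ) (x : ℤ → X) : Prop :=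
  ∀ i : ℤ, dist (f (x i)) (x (i + 1)) < d

/-- The nonwandering set of `f`: points `x` such that for every neighborhood `V` of `x`
there exists `n ≥ 1` with `f^[n] '' V ∩ V ≠ ∅`. -/
def NonWanderingSet {X : Type*} [TopologicalSpace X] (f : X → X) : Set X :=
  {x | ∀ V ∈ nhds x, ∃ n : ℕ, 1 ≤ n ∧ ∃ y ∈ V, f^[n] y ∈ V}

/-!
The complement `K` of `U` is compact and disjoint from the closed set `Ω(f)`, hence so is a
closed `δ`-neighbourhood `C` of `K`. A forward orbit staying in `C` forever would have an
`ω`-limit point in `C`, and `ω`-limit points are nonwandering; so every orbit leaves `C`, and by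
compactness it does so within a uniform number `N` of steps. On the other hand, uniform continuity
of `f` shows that a sufficiently fine pseudotrajectory is `δ`-shadowed for `N` steps by the true
orbit of its starting point. A pseudotrajectory lying in `K` for more than `N` steps therefore
drags that true orbit through `C` for `N` steps, which is impossible.
-/

open Filter Topology Metric Set Function

section NonWandering

variable {X : Type*} [TopologicalSpace X]

theorem isClosed_nonWanderingSet (f : X → X) : IsClosed (NonWanderingSet f) := by
  rw [← isOpen_compl_iff, isOpen_iff_mem_nhds]
  intro x hx
  simp only [mem_compl_iff, NonWanderingSet, mem_ofPred_eq, not_forall] at hx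
  obtain ⟨V, hV, hV_wandering⟩ := hx
  filter_upwards [eventually_mem_nhds_iff.2 hV] with w hw hw_nonwandering
  exact hV_wandering (hw_nonwandering V hw)

theorem mem_nonWanderingSet_of_mapClusterPt_iterate {f : X → X} {y z : X}
    (hz : MapClusterPt z atTop fun n => f^[n] y) : z ∈ NonWanderingSet f := by
  intro V hV
  have hfreq := frequently_atTop.1 (mapClusterPt_iff_frequently.1 hz V hV)
  obtain ⟨m, -, hm⟩ := hfreq 0
  obtain ⟨n, hmn, hn⟩ := hfreq (m + 1)
  refine ⟨n - m, by omega, f^[m] y, hm, ?_⟩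
  rwa [← iterate_add_apply, Nat.sub_add_cancel (by omega)]

theorem exists_iterate_notMem_of_disjoint_nonWanderingSet {f : X → X} {C : Set X}
    (hC : IsCompact C) (hCΩ : Disjoint C (NonWanderingSet f)) (y : X) :
    ∃ n, f^[n] y ∉ C := by
  by_contra! horbit
  obtain ⟨z, hzC, hz⟩ :=
    hC.exists_mapClusterPt_of_frequently (l := atTop) (Frequently.of_forall horbit)
  exact hCΩ.notMem_of_mem_left hzC (mem_nonWanderingSet_of_mapClusterPt_iterate hz)

theorem exists_bound_iterate_notMem_of_disjoint_nonWanderingSet [CompactSpace X] {f : X → X}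
    (hf : Continuous f) {C : Set X} (hC : IsClosed C) (hCΩ : Disjoint C (NonWanderingSet f)) :
    ∃ N : ℕ, ∀ y, ∃ n ≤ N, f^[n] y ∉ C := by
  obtain ⟨t, ht⟩ := isCompact_univ.elim_finite_subcover (fun n => f^[n] ⁻¹' Cᶜ)
    (fun n => hC.isOpen_compl.preimage (hf.iterate n))
    fun y _ => mem_iUnion.2 <|
      exists_iterate_notMem_of_disjoint_nonWanderingSet hC.isCompact hCΩ y
  refine ⟨t.sup id, fun y => ?_⟩
  obtain ⟨n, hn, hy⟩ := mem_iUnion₂.1 (ht (mem_univ y))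
  exact ⟨n, Finset.le_sup (f := id) hn, hy⟩

end NonWandering

section PseudoTraj

variable {X : Type*} [MetricSpace X] {f : X → X}

theorem IsPseudoTraj.mono {d d' : ℝ} {x : ℤ → X} (hx : IsPseudoTraj f d x) (hdd' : d ≤ d') :
    IsPseudoTraj f d' x :=
  fun i => (hx i).trans_le hdd'

theorem exists_pos_forall_isPseudoTraj_dist_iterate_lt (hf : UniformContinuous f) (N : ℕ)
    {ε : ℝ} (hε : 0 < ε) :
    ∃ d₁ > 0, ∀ x : ℤ → X, IsPseudoTraj f d₁ x →
      ∀ (k : ℤ), ∀ i ≤ N, dist (f^[i] (x k)) (x (k + i)) < ε := by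
  induction N generalizing ε with
  | zero =>
    refine ⟨1, one_pos, fun x _ k i hi => ?_⟩
    obtain rfl : i = 0 := by omega
    simpa using hε
  | succ N ih =>
    obtain ⟨η, hη, hfη⟩ := Metric.uniformContinuous_iff.1 hf (ε / 2) (half_pos hε)
    obtain ⟨d, hd, hshadow⟩ := ih (lt_min hη hε)
    refine ⟨min d (ε / 2), lt_min hd (half_pos hε), fun x hx k i hi => ?_⟩
    have hshadow' := hshadow x (hx.mono (min_le_left _ _)) k
    rcases Nat.lt_succ_iff_lt_or_eq.1 (Nat.lt_succ_of_le hi) with hi | rfl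
    · exact (hshadow' i (by omega)).trans_le (min_le_right _ _)
    calc dist (f^[N + 1] (x k)) (x (k + ↑(N + 1)))
        ≤ dist (f (f^[N] (x k))) (f (x (k + N))) + dist (f (x (k + N))) (x (k + N + 1)) := by
          rw [iterate_succ_apply', Nat.cast_succ, ← add_assoc]
          exact dist_triangle _ _ _
      _ < ε / 2 + ε / 2 :=
          add_lt_add (hfη ((hshadow' N le_rfl).trans_le (min_le_left _ _)))
            ((hx (k + N)).trans_le (min_le_right _ _))
      _ = ε := add_halves ε

end PseudoTraj

/-- Let `f` be a homeomorphism of a compact metric space `X`. For any open neighborhood `U`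
of the nonwandering set `Ω(f)` there exist positive numbers `B, d₁` such that: if `{x i}`
is a `d`-pseudotrajectory of `f` with `d ≤ d₁` and `x k, x (k+1), …, x (k+l) ∉ U` for
some `l > 0` and `k ∈ ℤ`, then `l ≤ B`. -/
theorem omega_stability_lemma1 {X : Type*} [MetricSpace X] [CompactSpace X]
    (f : X ≃ₜ X) (U : Set X) (hUopen : IsOpen U) (hU : NonWanderingSet f ⊆ U) :
    ∃ B > (0 : ℝ), ∃ d₁ > (0 : ℝ), ∀ d : ℝ, 0 < d → d ≤ d₁ →
      ∀ x : ℤ → X, IsPseudoTraj f d x →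
        ∀ (k : ℤ) (l : ℕ), 0 < l →
          (∀ j : ℕ, j ≤ l → x (k + j) ∉ U) → (l : ℝ) ≤ B := by
  obtain ⟨δ, hδ, hδΩ⟩ := hUopen.isClosed_compl.isCompact.exists_cthickening_subset_open
    (isClosed_nonWanderingSet f).isOpen_compl (compl_subset_compl.2 hU)
  obtain ⟨N, hN⟩ := exists_bound_iterate_notMem_of_disjoint_nonWanderingSet f.continuous
    isClosed_cthickening (subset_compl_iff_disjoint_right.1 hδΩ)
  obtain ⟨d₁, hd₁, hshadow⟩ := exists_pos_forall_isPseudoTraj_dist_iterate_lt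
    (CompactSpace.uniformContinuous_of_continuous f.continuous) N hδ
  refine ⟨N + 1, by positivity, d₁, hd₁, fun d _ hd x hx k l _ hxU => ?_⟩
  suffices l ≤ N by exact_mod_cast this.trans N.le_succ
  by_contra! hNl
  obtain ⟨i, hiN, hi⟩ := hN (x k)
  exact hi (mem_cthickening_of_dist_le _ _ δ _ (hxU i (by omega))
    (hshadow x (hx.mono hd) k i hiN).le)
end

section
/- Let f be a homeomorphism of a compact metric space (X, dist) having the periodic shadowing property. Then the nonwandering set Ω(f) is contained in the closure of the set Per(f) of periodic points of f. -/
/-- `x : ℤ → X` is periodic: `x (i + μ) = x i` for all `i` and some `μ ≥ 1`. -/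
def IsPeriodicSeq {X : Type*} (x : ℤ → X) : Prop :=
  ∃ μ : ℕ, 1 ≤ μ ∧ ∀ i : ℤ, x (i + μ) = x i

/-- A homeomorphism `f` has the periodic shadowing property: for every `ε > 0` there is
`d > 0` such that every periodic `d`-pseudotrajectory is `ε`-shadowed by the trajectory
of a periodic point of `f`. -/
def PeriodicShadowing {X : Type*} [MetricSpace X] (f : X ≃ₜ X) : Prop :=
  ∀ ε > (0 : ℝ), ∃ d > (0 : ℝ), ∀ x : ℤ → X, IsPseudoTraj f d x → IsPeriodicSeq x →
    ∃ p : X, (∃ μ : ℕ, 1 ≤ μ ∧ (⇑f)^[μ] p = p) ∧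
      ∀ i : ℤ, dist ((f.toEquiv ^ i) p) (x i) < ε

/-!
A nonwandering point `x` has, in every small ball around it, a point `y` returning to the
ball after `n ≥ 1` steps. Running the orbit segment `y, f y, …, f^[n-1] y` and then jumping
back to `y` gives a periodic pseudotrajectory whose only error, `dist (f^[n] y) y`, is
at most twice the radius. A periodic point shadowing it lies close to `y`, hence to `x`.
-/

theorem Int.add_one_emod_of_add_one_lt {i n : ℤ} (hn : 0 < n) (h : i % n + 1 < n) :
    (i + 1) % n = i % n + 1 := by
  rw [← Int.emod_add_emod, Int.emod_eq_of_lt (by linarith [Int.emod_nonneg i hn.ne']) h]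

theorem Int.add_one_emod_of_add_one_eq {i n : ℤ} (h : i % n + 1 = n) : (i + 1) % n = 0 := by
  rw [← Int.emod_add_emod, h, Int.emod_self]

section OrbitLoop

variable {X : Type*}

def orbitLoop (f : X → X) (n : ℕ) (y : X) : ℤ → X :=
  fun i => f^[(i % n).toNat] y

@[simp]
theorem orbitLoop_zero (f : X → X) (n : ℕ) (y : X) : orbitLoop f n y 0 = y := by
  simp [orbitLoop]

theorem isPeriodicSeq_orbitLoop (f : X → X) {n : ℕ} (hn : 1 ≤ n) (y : X) :
    IsPeriodicSeq (orbitLoop f n y) :=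
  ⟨n, hn, fun i => by simp [orbitLoop]⟩

theorem isPseudoTraj_orbitLoop [MetricSpace X] (f : X → X) {n : ℕ} (hn : 1 ≤ n) {y : X} {d : ℝ}
    (hd : 0 < d) (hreturn : dist (f^[n] y) y < d) : IsPseudoTraj f d (orbitLoop f n y) := by
  intro i
  have hn' : (0 : ℤ) < n := by exact_mod_cast hn
  have hlt : i % n < n := Int.emod_lt_of_pos i hn'
  have hnonneg : 0 ≤ i % n := Int.emod_nonneg i hn'.ne'
  rcases (show i % n + 1 < n ∨ i % n + 1 = n by omega) with hstep | hwrap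
  · have hsucc : ((i + 1) % n).toNat = (i % n).toNat + 1 := by
      rw [Int.add_one_emod_of_add_one_lt hn' hstep]; omega
    simpa [orbitLoop, hsucc, Function.iterate_succ_apply'] using hd
  · have hlast : (i % n).toNat + 1 = n := by omega
    simpa [orbitLoop, Int.add_one_emod_of_add_one_eq hwrap, ← Function.iterate_succ_apply' f,
      hlast] using hreturn

end OrbitLoop

theorem nonwandering_subset_closure_periodic_general {X : Type*} [MetricSpace X]
    (f : X ≃ₜ X) (hf : PeriodicShadowing f) :
    NonWanderingSet f ⊆ closure {p : X | ∃ μ : ℕ, 1 ≤ μ ∧ (⇑f)^[μ] p = p} := by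
  intro x hx
  rw [Metric.mem_closure_iff]
  intro ε hε
  obtain ⟨d, hd, hshadow⟩ := hf (ε / 2) (half_pos hε)
  obtain ⟨n, hn, y, hy, hny⟩ :=
    hx (Metric.ball x (min (d / 2) (ε / 2))) (Metric.ball_mem_nhds x (by positivity))
  rw [Metric.mem_ball, lt_min_iff] at hy hny
  have hreturn : dist (f^[n] y) y < d := by
    linarith [dist_triangle_right (f^[n] y) y x]
  obtain ⟨p, hp, hpy⟩ := hshadow _ (isPseudoTraj_orbitLoop f hn hd hreturn)
    (isPeriodicSeq_orbitLoop f hn y)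
  refine ⟨p, hp, ?_⟩
  have hpy : dist p y < ε / 2 := by simpa using hpy 0
  linarith [dist_triangle_right x p y, dist_comm x y]

/-- If a homeomorphism `f` of a compact metric space has the periodic shadowing property,
then the nonwandering set `Ω(f)` is contained in the closure of the set of periodic
points of `f`. -/
theorem nonwandering_subset_closure_periodic {X : Type*} [MetricSpace X] [CompactSpace X]
    (f : X ≃ₜ X) (hf : PeriodicShadowing f) :
    NonWanderingSet f ⊆ closure {p : X | ∃ μ : ℕ, 1 ≤ μ ∧ (⇑f)^[μ] p = p} :=
  nonwandering_subset_closure_periodic_general f hf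
end

section
/- Let E be a real normed vector space, let A : E → E be a continuous linear map with operator norm ‖A‖ ≤ N, let μ ∈ (0, 1], and let F : E → E be a map satisfying ‖F(v) − A(v)‖ ≤ μ‖v‖ for all v ∈ E. Then for every q ∈ E and every integer k ≥ 0, ‖F^k(q) − A^k(q)‖ ≤ μ · k · (N + 1)^k · ‖q‖. In particular, the deviation of the orbit of F from the orbit of its linearization A over any fixed number of steps K is at most μ·ν·‖q‖ with ν = K(N+1)^K depending only on K and N. -/
/-! Write `d k = ‖F^[k] q - A^k q‖` and `M = N + 1`. Since `μ ≤ 1`, both `F` and `A` grow by at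
most the factor `M`, and splitting `F^[k+1] q - A^(k+1) q = (F - A)(F^[k] q) + A (F^[k] q - A^k q)`
gives `d (k+1) ≤ μ M^k ‖q‖ + M d k`, whence `d (k+1) ≤ μ (k+1) M^k ‖q‖`. -/

theorem norm_iterate_le_pow_mul_norm {α : Type*} [Norm α] {f : α → α} {L : ℝ} (hL : 0 ≤ L)
    (hf : ∀ v, ‖f v‖ ≤ L * ‖v‖) (q : α) (k : ℕ) : ‖f^[k] q‖ ≤ L ^ k * ‖q‖ := by
  induction k with
  | zero => simp
  | succ k ih =>
    rw [Function.iterate_succ_apply']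
    calc ‖f (f^[k] q)‖ ≤ L * ‖f^[k] q‖ := hf _
      _ ≤ L * (L ^ k * ‖q‖) := mul_le_mul_of_nonneg_left ih hL
      _ = L ^ (k + 1) * ‖q‖ := by ring

section

variable {E : Type*} [NormedAddCommGroup E] [NormedSpace ℝ E]

theorem norm_le_of_norm_sub_clm_le {A : E →L[ℝ] E} {N μ : ℝ} (hA : ‖A‖ ≤ N) {F : E → E}
    (hF : ∀ v, ‖F v - A v‖ ≤ μ * ‖v‖) (v : E) : ‖F v‖ ≤ (N + μ) * ‖v‖ :=
  calc ‖F v‖ = ‖(F v - A v) + A v‖ := by rw [sub_add_cancel]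
    _ ≤ ‖F v - A v‖ + ‖A v‖ := norm_add_le _ _
    _ ≤ μ * ‖v‖ + N * ‖v‖ := add_le_add (hF v) (A.le_of_opNorm_le hA v)
    _ = (N + μ) * ‖v‖ := by ring

theorem norm_iterate_succ_sub_pow_succ_le {A : E →L[ℝ] E} {M μ : ℝ} (hA : ‖A‖ ≤ M)
    {F : E → E} (hF : ∀ v, ‖F v - A v‖ ≤ μ * ‖v‖) (hFM : ∀ v, ‖F v‖ ≤ M * ‖v‖) (hμ : 0 ≤ μ)
    (q : E) (k : ℕ) : ‖F^[k + 1] q - (A ^ (k + 1)) q‖ ≤ μ * (k + 1) * M ^ k * ‖q‖ := by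
  have hM : 0 ≤ M := (norm_nonneg A).trans hA
  induction k with
  | zero => simpa using hF q
  | succ k ih =>
    set x := F^[k + 1] q
    have hsplit : F^[k + 2] q - (A ^ (k + 2)) q = (F x - A x) + A (x - (A ^ (k + 1)) q) := by
      rw [Function.iterate_succ_apply', pow_succ', mul_apply_eq_comp, map_sub]
      abel
    have hdefect : ‖F x - A x‖ ≤ μ * (M ^ (k + 1) * ‖q‖) :=
      (hF x).trans (mul_le_mul_of_nonneg_left (norm_iterate_le_pow_mul_norm hM hFM q _) hμ)
    have hpropagated : ‖A (x - (A ^ (k + 1)) q)‖ ≤ M * (μ * (k + 1) * M ^ k * ‖q‖) :=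
      A.le_of_opNorm_le_of_le hA ih
    calc ‖F^[k + 2] q - (A ^ (k + 2)) q‖
        ≤ ‖F x - A x‖ + ‖A (x - (A ^ (k + 1)) q)‖ := hsplit ▸ norm_add_le _ _
      _ ≤ μ * (M ^ (k + 1) * ‖q‖) + M * (μ * (k + 1) * M ^ k * ‖q‖) :=
          add_le_add hdefect hpropagated
      _ = μ * ((k + 1 : ℕ) + 1 : ℝ) * M ^ (k + 1) * ‖q‖ := by push_cast; ring

end

/-- Let `A : E → E` be a continuous linear map with `‖A‖ ≤ N`, let `μ ∈ (0, 1]`, and let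
`F : E → E` satisfy `‖F v - A v‖ ≤ μ * ‖v‖` for all `v`. Then for every `q ∈ E` and every
`k ≥ 0`, the `k`-th iterates satisfy `‖F^[k] q - A^k q‖ ≤ μ * k * (N + 1)^k * ‖q‖`. -/
theorem iterate_deviation_from_linearization {E : Type*} [NormedAddCommGroup E]
    [NormedSpace ℝ E] (A : E →L[ℝ] E) (N : ℝ) (hA : ‖A‖ ≤ N)
    (μ : ℝ) (hμ0 : 0 < μ) (hμ1 : μ ≤ 1)
    (F : E → E) (hF : ∀ v : E, ‖F v - A v‖ ≤ μ * ‖v‖) :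
    ∀ (q : E) (k : ℕ), ‖F^[k] q - (A ^ k) q‖ ≤ μ * k * (N + 1) ^ k * ‖q‖ := by
  intro q k
  have hN : 0 ≤ N := (norm_nonneg A).trans hA
  have hFM : ∀ v, ‖F v‖ ≤ (N + 1) * ‖v‖ := fun v =>
    (norm_le_of_norm_sub_clm_le hA hF v).trans (by gcongr)
  cases k with
  | zero => simp
  | succ k =>
    calc ‖F^[k + 1] q - (A ^ (k + 1)) q‖ ≤ μ * (k + 1) * (N + 1) ^ k * ‖q‖ :=
          norm_iterate_succ_sub_pow_succ_le (hA.trans (by linarith)) hF hFM hμ0.le q k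
      _ ≤ μ * (k + 1) * (N + 1) ^ (k + 1) * ‖q‖ := by
          gcongr
          · linarith
          · omega
      _ = μ * ((k + 1 : ℕ) : ℝ) * (N + 1) ^ (k + 1) * ‖q‖ := by push_cast; ring
end

section
/- Let E be a real normed vector space, let C > 0 and λ ∈ (0, 1), and for each integer j ≥ 0 let T_j : E → E be a linear map. Let S₀, U₀, S₁, U₁ be linear subspaces of E such that E = S₀ ⊕ U₀ and E = S₁ ⊕ U₁. Assume that ‖T_j v‖ ≤ C λ^j ‖v‖ for all j ≥ 0 and all v ∈ S₀ ∪ S₁, and that ‖T_j v‖ ≥ C^{−1} λ^{−j} ‖v‖ for all j ≥ 0 and all v ∈ U₀ ∪ U₁. Then S₀ = S₁. -/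
/-!
Both stable subspaces are the set of vectors `v` whose orbit decays like `λ ^ j`, i.e.
`‖T j v‖ ≤ K λ ^ j` for some `K`. Indeed, write such a `v` as `s + u` along `E = S ⊕ U`; then
`T j u = T j v - T j s` is also `O(λ ^ j)`, while the expansion on `U` gives
`‖u‖ ≤ C λ ^ j ‖T j u‖ = O(λ ^ (2 j))`, so `u = 0`.
-/

lemma le_zero_of_forall_le_mul_pow {a K r : ℝ} (hr0 : 0 ≤ r) (hr1 : r < 1)
    (h : ∀ n : ℕ, a ≤ K * r ^ n) : a ≤ 0 := by
  have hlim := (tendsto_pow_atTop_nhds_zero_of_lt_one hr0 hr1).const_mul K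
  rw [mul_zero] at hlim
  exact ge_of_tendsto' hlim h

section StableSubspace

variable {E : Type*} [NormedAddCommGroup E] [NormedSpace ℝ E]
  {C lam : ℝ} {T : ℕ → E →ₗ[ℝ] E}

lemma eq_zero_of_expanding_of_norm_le_mul_pow (hC : 0 < C) (hlam0 : 0 < lam) (hlam1 : lam < 1)
    {u : E} {K : ℝ} (hexp : ∀ j : ℕ, C⁻¹ * (lam ^ j)⁻¹ * ‖u‖ ≤ ‖T j u‖)
    (hdecay : ∀ j : ℕ, ‖T j u‖ ≤ K * lam ^ j) : u = 0 := by
  have hbound : ∀ j : ℕ, ‖u‖ ≤ C * K * (lam ^ 2) ^ j := fun j => by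
    have hpos : 0 < C * lam ^ j := by positivity
    calc ‖u‖ = C * lam ^ j * (C⁻¹ * (lam ^ j)⁻¹ * ‖u‖) := by field_simp
      _ ≤ C * lam ^ j * (K * lam ^ j) :=
        mul_le_mul_of_nonneg_left ((hexp j).trans (hdecay j)) hpos.le
      _ = C * K * (lam ^ 2) ^ j := by ring
  have hlam2 : lam ^ 2 < 1 := pow_lt_one₀ hlam0.le hlam1 two_ne_zero
  exact norm_le_zero_iff.mp (le_zero_of_forall_le_mul_pow (by positivity) hlam2 hbound)

lemma Submodule.mem_iff_exists_norm_le_mul_pow (hC : 0 < C) (hlam0 : 0 < lam)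
    (hlam1 : lam < 1) {S U : Submodule ℝ E} (hSU : Codisjoint S U)
    (hS : ∀ j : ℕ, ∀ v ∈ S, ‖T j v‖ ≤ C * lam ^ j * ‖v‖)
    (hU : ∀ j : ℕ, ∀ u ∈ U, C⁻¹ * (lam ^ j)⁻¹ * ‖u‖ ≤ ‖T j u‖) {v : E} :
    v ∈ S ↔ ∃ K : ℝ, ∀ j : ℕ, ‖T j v‖ ≤ K * lam ^ j := by
  refine ⟨fun hv => ⟨C * ‖v‖, fun j => (hS j v hv).trans_eq (by ring)⟩, ?_⟩
  rintro ⟨K, hK⟩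
  obtain ⟨s, u, hs, hu, rfl⟩ := Submodule.codisjoint_iff_exists_add_eq.mp hSU v
  suffices u = 0 by simpa [this] using hs
  refine eq_zero_of_expanding_of_norm_le_mul_pow hC hlam0 hlam1 (hU · u hu)
    (K := K + C * ‖s‖) fun j => ?_
  calc ‖T j u‖ = ‖T j (s + u) - T j s‖ := by rw [map_add, add_sub_cancel_left]
    _ ≤ ‖T j (s + u)‖ + ‖T j s‖ := norm_sub_le _ _
    _ ≤ K * lam ^ j + C * lam ^ j * ‖s‖ := add_le_add (hK j) (hS j s hs)
    _ = (K + C * ‖s‖) * lam ^ j := by ring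

end StableSubspace

/-- Let `E` be a real normed space, `C > 0`, `λ ∈ (0,1)`, and for each `j ≥ 0` let
`T j : E → E` be a linear map. Let `S₀, U₀, S₁, U₁` be subspaces with `E = S₀ ⊕ U₀` and
`E = S₁ ⊕ U₁` (complementary subspaces, expressed via `IsCompl`). If
`‖T j v‖ ≤ C λ^j ‖v‖` for all `j` and all `v ∈ S₀ ∪ S₁`, and
`‖T j v‖ ≥ C⁻¹ λ^{-j} ‖v‖` for all `j` and all `v ∈ U₀ ∪ U₁`, then `S₀ = S₁`. -/
theorem stable_subspace_unique {E : Type*} [NormedAddCommGroup E] [NormedSpace ℝ E]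
    (C lam : ℝ) (hC : 0 < C) (hlam0 : 0 < lam) (hlam1 : lam < 1)
    (T : ℕ → E →ₗ[ℝ] E)
    (S₀ U₀ S₁ U₁ : Submodule ℝ E)
    (hc0 : IsCompl S₀ U₀) (hc1 : IsCompl S₁ U₁)
    (hS : ∀ j : ℕ, ∀ v ∈ (S₀ : Set E) ∪ (S₁ : Set E), ‖T j v‖ ≤ C * lam ^ j * ‖v‖)
    (hU : ∀ j : ℕ, ∀ v ∈ (U₀ : Set E) ∪ (U₁ : Set E),
      C⁻¹ * (lam ^ j)⁻¹ * ‖v‖ ≤ ‖T j v‖) :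
    S₀ = S₁ := by
  ext v
  rw [Submodule.mem_iff_exists_norm_le_mul_pow hC hlam0 hlam1 hc0.codisjoint
      (fun j v hv => hS j v (Or.inl hv)) (fun j u hu => hU j u (Or.inl hu)),
    Submodule.mem_iff_exists_norm_le_mul_pow hC hlam0 hlam1 hc1.codisjoint
      (fun j v hv => hS j v (Or.inr hv)) (fun j u hu => hU j u (Or.inr hu))]
end

section
/- Let m ≥ 1, let B : ℝ^m → ℝ^m be a linear automorphism, and define the homeomorphism H : ℝ × ℝ^m → ℝ × ℝ^m by H(u, w) = (u, Bw), where ℝ × ℝ^m carries the Euclidean distance. Then H does not have the periodic shadowing property; that is, there exists ε > 0 such that for every d > 0 there is a periodic d-pseudotrajectory {x_i}_{i∈ℤ} of H such that no periodic point p of H satisfies dist(H^i(p), x_i) < ε for all i ∈ ℤ. -/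
/-!
The first coordinate `u` is a first integral of `H` and is `1`-Lipschitz, so an orbit of `H`
keeps a constant first coordinate while it shadows. A periodic pseudotrajectory made of fixed
points of `H`, namely `x_i = (cos (π i / k), 0)`, moves with steps at most `π / k` but has
first coordinate `1` at `i = 0` and `-1` at `i = k`; no orbit stays within `1` of both.
-/

open Function Real

section Shadowing

variable {X : Type*} [MetricSpace X]

lemma isPseudoTraj_of_forall_isFixedPt {f : X → X} {d : ℝ} {x : ℤ → X}
    (hfix : ∀ i, IsFixedPt f (x i)) (hstep : ∀ i, dist (x i) (x (i + 1)) < d) :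
    IsPseudoTraj f d x := fun i => by
  rw [hfix i]
  exact hstep i

lemma not_forall_dist_zpow_lt_of_lipschitz_invariant {Y : Type*} [MetricSpace Y]
    {f : Equiv.Perm X} {φ : X → Y} (hφ : LipschitzWith 1 φ) (hinv : ∀ y, φ (f y) = φ y)
    {ε : ℝ} {x : ℤ → X} {k : ℕ} (hk : 2 * ε ≤ dist (φ (x 0)) (φ (x k))) (p : X) :
    ¬ ∀ i : ℤ, dist ((f ^ i) p) (x i) < ε := by
  intro hshadow
  have hφ_pow : φ ((f ^ (k : ℤ)) p) = φ p := by
    rw [zpow_natCast, Equiv.Perm.coe_pow,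
      (Semiconj.iterate_right (show Semiconj φ f id from hinv) k).eq, iterate_id, id]
  have h0 : dist (φ p) (φ (x 0)) < ε :=
    (hφ.dist_le_mul_of_le le_rfl).trans_lt (by simpa using hshadow 0)
  have hk' : dist (φ p) (φ (x k)) < ε := by
    rw [← hφ_pow]
    exact (hφ.dist_le_mul_of_le le_rfl).trans_lt (by simpa using hshadow k)
  linarith [dist_triangle_left (φ (x 0)) (φ (x k)) (φ p)]

end Shadowing

section CosWave

noncomputable def cosWave (k : ℕ) (i : ℤ) : ℝ := cos (π * i / k)

variable {k : ℕ}

lemma cosWave_add_two_mul (hk : k ≠ 0) (i : ℤ) : cosWave k (i + 2 * k) = cosWave k i := by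
  have : π * ↑(i + 2 * k) / k = π * i / k + 2 * π := by
    push_cast
    field_simp
  rw [cosWave, this, cos_add_two_pi, cosWave]

lemma dist_cosWave_succ_le (i : ℤ) : dist (cosWave k i) (cosWave k (i + 1)) ≤ π / k := by
  calc dist (cosWave k i) (cosWave k (i + 1)) ≤ |π * i / k - π * ↑(i + 1) / k| :=
        abs_cos_sub_cos_le _ _
    _ = π / k := by
        rw [Int.cast_add, Int.cast_one, ← sub_div, abs_div, Nat.abs_cast]
        congr 1
        rw [show π * i - π * (i + 1) = -π by ring, abs_neg, abs_of_pos pi_pos]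

lemma dist_cosWave_zero_self (hk : k ≠ 0) : dist (cosWave k 0) (cosWave k k) = 2 := by
  have : π * ((k : ℤ) : ℝ) / k = π := by
    rw [Int.cast_natCast, mul_div_assoc, div_self (Nat.cast_ne_zero.mpr hk), mul_one]
  rw [cosWave, cosWave, this, cos_pi, Int.cast_zero, mul_zero, zero_div, cos_zero,
    Real.dist_eq]
  norm_num

end CosWave

theorem no_periodic_shadowing_neutral_direction_general (m : ℕ)
    (B : EuclideanSpace ℝ (Fin m) ≃ₗ[ℝ] EuclideanSpace ℝ (Fin m))
    (H : WithLp 2 (ℝ × EuclideanSpace ℝ (Fin m)) ≃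
      WithLp 2 (ℝ × EuclideanSpace ℝ (Fin m)))
    (hH : ∀ x, H x = (WithLp.equiv 2 (ℝ × EuclideanSpace ℝ (Fin m))).symm
      (((WithLp.equiv 2 (ℝ × EuclideanSpace ℝ (Fin m))) x).1,
        B ((WithLp.equiv 2 (ℝ × EuclideanSpace ℝ (Fin m))) x).2)) :
    ∃ ε > (0 : ℝ), ∀ d > (0 : ℝ),
      ∃ x : ℤ → WithLp 2 (ℝ × EuclideanSpace ℝ (Fin m)),
        IsPseudoTraj H d x ∧ IsPeriodicSeq x ∧
        ∀ p, (∃ μ : ℕ, 1 ≤ μ ∧ (H ^ μ) p = p) →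
          ¬ ∀ i : ℤ, dist ((H ^ i) p) (x i) < ε := by
  refine ⟨1, one_pos, fun d hd => ?_⟩
  obtain ⟨k, hk⟩ := exists_nat_gt (π / d)
  have hk0 : k ≠ 0 := Nat.cast_ne_zero.mp ((div_pos pi_pos hd).trans hk).ne'
  have hstep : π / k < d := (div_lt_comm₀ (by positivity) hd).mpr hk
  let x : ℤ → WithLp 2 (ℝ × EuclideanSpace ℝ (Fin m)) :=
    fun i => WithLp.toLp 2 (cosWave k i, 0)
  refine ⟨x, ?_, ⟨2 * k, by omega, fun i => ?_⟩, fun p _ => ?_⟩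
  · refine isPseudoTraj_of_forall_isFixedPt (fun i => ?_) (fun i => ?_)
    · rw [IsFixedPt, hH]
      simp [x]
    · simpa [x] using (dist_cosWave_succ_le i).trans_lt hstep
  · simp only [x, Nat.cast_mul, Nat.cast_ofNat, cosWave_add_two_mul hk0]
  · refine not_forall_dist_zpow_lt_of_lipschitz_invariant (φ := WithLp.fst)
      (LipschitzWith.of_dist_le_mul fun a b => by simpa using WithLp.dist_fst_le a b)
      (fun y => by rw [hH]; rfl) (k := k) ?_ p
    simp [x, dist_cosWave_zero_self hk0]

/-- Let `m ≥ 1`, let `B` be a linear automorphism of `ℝ^m`, and let `H` be the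
homeomorphism of `ℝ × ℝ^m` (with the Euclidean distance, realized as the `L²` product
`WithLp 2 (ℝ × EuclideanSpace ℝ (Fin m))`) given by `H (u, w) = (u, B w)`. Then `H` does
not have the periodic shadowing property: there exists `ε > 0` such that for every `d > 0`
there is a periodic `d`-pseudotrajectory of `H` that is not `ε`-shadowed by the trajectory
of any periodic point of `H`. -/
theorem no_periodic_shadowing_neutral_direction (m : ℕ) (hm : 1 ≤ m)
    (B : EuclideanSpace ℝ (Fin m) ≃ₗ[ℝ] EuclideanSpace ℝ (Fin m))
    (H : WithLp 2 (ℝ × EuclideanSpace ℝ (Fin m)) ≃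
      WithLp 2 (ℝ × EuclideanSpace ℝ (Fin m)))
    (hH : ∀ x, H x = (WithLp.equiv 2 (ℝ × EuclideanSpace ℝ (Fin m))).symm
      (((WithLp.equiv 2 (ℝ × EuclideanSpace ℝ (Fin m))) x).1,
        B ((WithLp.equiv 2 (ℝ × EuclideanSpace ℝ (Fin m))) x).2)) :
    ∃ ε > (0 : ℝ), ∀ d > (0 : ℝ),
      ∃ x : ℤ → WithLp 2 (ℝ × EuclideanSpace ℝ (Fin m)),
        IsPseudoTraj H d x ∧ IsPeriodicSeq x ∧
        ∀ p, (∃ μ : ℕ, 1 ≤ μ ∧ (H ^ μ) p = p) →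
          ¬ ∀ i : ℤ, dist ((H ^ i) p) (x i) < ε :=
  no_periodic_shadowing_neutral_direction_general m B H hH
end
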